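/- arXiv:2411.19321 — 9 statements merged into one kernel-verified Lean document; each statement's English description precedes it below -/
import Mathlib

section
/- The function g is strictly increasing on ℝ and is a bijection from ℝ onto ℝ (in particular g is invertible). -/
open Real Filter Set

theorem one_add_mul_abs_rpow_pos {c : ℝ} (hc : 0 ≤ c) (x p : ℝ) : 0 < 1 + c * |x| ^ p := by
  have : 0 ≤ |x| ^ p := rpow_nonneg (abs_nonneg x) p
  positivity

theorem antitoneOn_one_add_mul_abs_rpow_rpow_neg {c p q : ℝ} (hc : 0 ≤ c) (hp : 0 ≤ p)
    (hq : 0 ≤ q) : AntitoneOn (fun x : ℝ => (1 + c * |x| ^ p) ^ (-q)) (Ici 0) := by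
  intro x hx y hy hxy
  have habs : |x| ^ p ≤ |y| ^ p := by
    rw [abs_of_nonneg hx, abs_of_nonneg hy]
    exact rpow_le_rpow hx hxy hp
  exact rpow_le_rpow_of_nonpos (one_add_mul_abs_rpow_pos hc x p)
    (by gcongr) (neg_nonpos.mpr hq)

section AutonomousODE

variable {F g : ℝ → ℝ}

theorem differentiable_of_deriv_pos (h : ∀ t, 0 < deriv g t) : Differentiable ℝ g :=
  fun t => differentiableAt_of_deriv_ne_zero (h t).ne'

/-- A solution of `g' = F ∘ g` with `F > 0` that stays bounded on `[0, ∞)` would have slope at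
least `F y > 0` there, where `y` bounds it, because `F` is antitone on `[0, ∞)`. -/
theorem tendsto_atTop_of_deriv_eq_comp (hF : ∀ x, 0 < F x) (hF_anti : AntitoneOn F (Ici 0))
    (hg : ∀ t, deriv g t = F (g t)) (hg0 : 0 ≤ g 0) : Tendsto g atTop atTop := by
  have hpos : ∀ t, 0 < deriv g t := fun t => hg t ▸ hF _
  have hmono := (strictMono_of_deriv_pos hpos).monotone
  have hdiff := differentiable_of_deriv_pos hpos
  refine hmono.tendsto_atTop_atTop fun y => ?_
  by_contra! hy
  have hy0 : 0 < y := hg0.trans_lt (hy 0)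
  have hslope : ∀ t ∈ interior (Ici (0 : ℝ)), F y ≤ deriv g t := by
    intro t ht
    rw [interior_Ici] at ht
    have hgt : 0 ≤ g t := hg0.trans (hmono ht.le)
    exact hg t ▸ hF_anti hgt hy0.le (hy t).le
  have hgrowth := (convex_Ici 0).mul_sub_le_image_sub_of_le_deriv hdiff.continuous.continuousOn
    hdiff.differentiableOn hslope 0 self_mem_Ici (y / F y) (div_pos hy0 (hF y)).le
    (div_pos hy0 (hF y)).le
  rw [sub_zero, mul_div_cancel₀ y (hF y).ne'] at hgrowth
  linarith [hy (y / F y)]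

end AutonomousODE

theorem g_strictMono_bijective_general (N : ℕ) (α : ℝ) (hα : 1 / 2 < α)
    (g : ℝ → ℝ) (hg_zero : g 0 = 0)
    (hg_odd : ∀ t : ℝ, g (-t) = -g t)
    (hg_deriv : ∀ t : ℝ, deriv g t =
      (1 + (2 * α) ^ ((N : ℝ) - 1) * |g t| ^ ((N : ℝ) * (2 * α - 1))) ^ (-(1 / (N : ℝ))))
    : StrictMono g ∧ Function.Bijective g := by
  have hc : 0 ≤ (2 * α) ^ ((N : ℝ) - 1) := rpow_nonneg (by linarith) _
  have hp : 0 ≤ (N : ℝ) * (2 * α - 1) := mul_nonneg N.cast_nonneg (by linarith)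
  have hF_pos (x : ℝ) : 0 < (1 + (2 * α) ^ ((N : ℝ) - 1) * |x| ^ ((N : ℝ) * (2 * α - 1))) ^
      (-(1 / (N : ℝ))) :=
    rpow_pos_of_pos (one_add_mul_abs_rpow_pos hc x _) _
  have hpos (t : ℝ) : 0 < deriv g t := hg_deriv t ▸ hF_pos (g t)
  have hmono : StrictMono g := strictMono_of_deriv_pos hpos
  have htop : Tendsto g atTop atTop := tendsto_atTop_of_deriv_eq_comp hF_pos
    (antitoneOn_one_add_mul_abs_rpow_rpow_neg hc hp (by positivity)) hg_deriv hg_zero.ge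
  have hbot : Tendsto g atBot atBot := by
    have h := tendsto_neg_atTop_atBot.comp (htop.comp tendsto_neg_atBot_atTop)
    simpa [Function.comp_def, hg_odd] using h
  exact ⟨hmono, hmono.injective,
    (differentiable_of_deriv_pos hpos).continuous.surjective htop hbot⟩

theorem g_strictMono_bijective (N : ℕ) (hN : 2 ≤ N) (α : ℝ) (hα : 1 / 2 < α)
    (g : ℝ → ℝ) (hg_diff : Differentiable ℝ g) (hg_zero : g 0 = 0)
    (hg_odd : ∀ t : ℝ, g (-t) = -g t)
    (hg_deriv : ∀ t : ℝ, deriv g t =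
      (1 + (2 * α) ^ ((N : ℝ) - 1) * |g t| ^ ((N : ℝ) * (2 * α - 1))) ^ (-(1 / (N : ℝ))))
    : StrictMono g ∧ Function.Bijective g :=
  g_strictMono_bijective_general N α hα g hg_zero hg_odd hg_deriv
end

section
/- For every t > 0 one has (1/2)·g(t) ≤ α·t·g'(t) ≤ α·g(t) (property (g_4) of Lemma 2.1). -/
/-!
Write `u = 1 + c |g|^β`, so that `g' = u^(-p)` with `c = (2α)^(N-1)`, `β = N(2α-1)`, `p = 1/N`.
Since `g` increases from `g 0 = 0`, `g'` decreases on `[0, ∞)`, so `g` is concave there and lies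
above its tangent lines: `t g'(t) ≤ g t`. For the other bound, `ψ t = (1 + pβ) t - g t · u^p`
vanishes at `0` and has derivative `pβ / u ≥ 0`, hence `g t ≤ (1 + pβ) t g'(t)`, and `1 + pβ = 2α`.
-/

open Real Set

section

variable {g : ℝ → ℝ} {c β p : ℝ}

lemma one_le_one_add_mul_abs_rpow (hc : 0 ≤ c) (y : ℝ) : 1 ≤ 1 + c * |y| ^ β :=
  le_add_of_nonneg_right (mul_nonneg hc (rpow_nonneg (abs_nonneg y) β))

lemma strictMono_of_hasDerivAt_one_add_mul_abs_rpow (hc : 0 ≤ c)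
    (hg : ∀ t, HasDerivAt g ((1 + c * |g t| ^ β) ^ (-p)) t) : StrictMono g :=
  strictMono_of_hasDerivAt_pos hg fun _ =>
    rpow_pos_of_pos (zero_lt_one.trans_le (one_le_one_add_mul_abs_rpow hc _)) _

lemma antitoneOn_one_add_mul_abs_rpow_neg (hc : 0 ≤ c) (hβ : 0 ≤ β) (hp : 0 ≤ p)
    (hg : ∀ t, HasDerivAt g ((1 + c * |g t| ^ β) ^ (-p)) t) (hg0 : g 0 = 0) :
    AntitoneOn (fun t => (1 + c * |g t| ^ β) ^ (-p)) (Ici 0) := by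
  have hmono := (strictMono_of_hasDerivAt_one_add_mul_abs_rpow hc hg).monotone
  intro s hs t _ hst
  have hgs : 0 ≤ g s := hg0 ▸ hmono hs
  have habs : |g s| ≤ |g t| := by
    rw [abs_of_nonneg hgs, abs_of_nonneg (hgs.trans (hmono hst))]
    exact hmono hst
  apply rpow_le_rpow_of_nonpos (zero_lt_one.trans_le (one_le_one_add_mul_abs_rpow hc _)) _
    (neg_nonpos.mpr hp)
  gcongr

/-- Tangent line of the concave function `g` at `t`, evaluated at `0`. -/
lemma mul_rpow_neg_le (hc : 0 ≤ c) (hβ : 0 ≤ β) (hp : 0 ≤ p)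
    (hg : ∀ t, HasDerivAt g ((1 + c * |g t| ^ β) ^ (-p)) t) (hg0 : g 0 = 0) {t : ℝ} (ht : 0 < t) :
    t * (1 + c * |g t| ^ β) ^ (-p) ≤ g t := by
  have hanti := antitoneOn_one_add_mul_abs_rpow_neg hc hβ hp hg hg0
  have := (convex_Icc 0 t).mul_sub_le_image_sub_of_le_deriv
    (fun x _ => (hg x).continuousAt.continuousWithinAt)
    (fun x _ => (hg x).differentiableAt.differentiableWithinAt)
    (fun x hx => by
      rw [interior_Icc] at hx
      rw [(hg x).deriv]
      exact hanti (mem_Ici.mpr hx.1.le) (mem_Ici.mpr ht.le) hx.2.le)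
    0 (left_mem_Icc.mpr ht.le) t (right_mem_Icc.mpr ht.le) ht.le
  simpa [hg0, mul_comm] using this

lemma hasDerivAt_mul_one_add_mul_rpow (hc : 0 ≤ c) {y : ℝ} (hy : 0 < y) :
    HasDerivAt (fun y => y * (1 + c * y ^ β) ^ p)
      ((1 + c * y ^ β) ^ (p - 1) * (1 + (1 + p * β) * c * y ^ β)) y := by
  have hu : 0 < 1 + c * y ^ β := by positivity
  have := (hasDerivAt_id y).mul
    ((((hasDerivAt_id y).rpow_const (p := β) (Or.inl hy.ne')).const_mul c).const_add 1
      |>.rpow_const (p := p) (Or.inl hu.ne'))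
  refine this.congr_deriv ?_
  simp only [id]
  rw [rpow_sub_one hu.ne', rpow_sub_one hy.ne']
  field_simp
  ring

/-- `ψ t = (1 + pβ) t - g t (1 + c (g t)^β)^p` is monotone, with `ψ' = pβ / (1 + c g^β)`. -/
lemma le_mul_mul_rpow_neg (hc : 0 ≤ c) (hβ : 0 ≤ β) (hp : 0 ≤ p)
    (hg : ∀ t, HasDerivAt g ((1 + c * |g t| ^ β) ^ (-p)) t) (hg0 : g 0 = 0) {t : ℝ} (ht : 0 < t) :
    g t ≤ (1 + p * β) * t * (1 + c * |g t| ^ β) ^ (-p) := by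
  have hpos : ∀ {s : ℝ}, 0 < s → 0 < g s := fun hs =>
    hg0 ▸ strictMono_of_hasDerivAt_one_add_mul_abs_rpow hc hg hs
  have hderiv : ∀ s, 0 < s → HasDerivAt
      (fun s => (1 + p * β) * s - g s * (1 + c * g s ^ β) ^ p)
      (p * β / (1 + c * g s ^ β)) s := by
    intro s hs
    have hu : 0 < 1 + c * g s ^ β := by have := hpos hs; positivity
    have hgs := hg s
    rw [abs_of_pos (hpos hs)] at hgs
    refine (((hasDerivAt_id s).const_mul (1 + p * β)).sub
      ((hasDerivAt_mul_one_add_mul_rpow hc (hpos hs)).comp s hgs)).congr_deriv ?_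
    rw [rpow_sub_one hu.ne', rpow_neg hu.le]
    field_simp
    ring
  have hψ := monotoneOn_of_hasDerivWithinAt_nonneg (convex_Ici (0 : ℝ))
    (f := fun s => (1 + p * β) * s - g s * (1 + c * g s ^ β) ^ p)
    (Continuous.continuousOn (by
      have hgc : Continuous g := continuous_iff_continuousAt.mpr fun s => (hg s).continuousAt
      fun_prop (disch := exact fun _ => Or.inr hβ)))
    (fun s hs => (hderiv s (by simpa using hs)).hasDerivWithinAt)
    (fun s hs => by
      have := hpos (by simpa using hs : 0 < s)
      positivity)
  have hψt := hψ self_mem_Ici ht.le ht.le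
  have hgt := hpos ht
  simp only [hg0, zero_mul, mul_zero, sub_zero] at hψt
  rw [abs_of_pos hgt, rpow_neg (by positivity)]
  have hu : 0 < (1 + c * g t ^ β) ^ p := by positivity
  rw [← div_eq_mul_inv, le_div_iff₀ hu]
  linarith

end

theorem g_four_general (N : ℕ) (hN : 2 ≤ N) (α : ℝ) (hα : 1 / 2 < α)
    (g : ℝ → ℝ) (hg_zero : g 0 = 0)
    (hg_deriv : ∀ t : ℝ, deriv g t =
      (1 + (2 * α) ^ ((N : ℝ) - 1) * |g t| ^ ((N : ℝ) * (2 * α - 1))) ^ (-(1 / (N : ℝ))))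
    : ∀ t : ℝ, 0 < t →
      (1 / 2) * g t ≤ α * t * deriv g t ∧ α * t * deriv g t ≤ α * g t := by
  intro t ht
  have hN₀ : (0 : ℝ) < N := by exact_mod_cast (by omega : 0 < N)
  have hc : 0 ≤ (2 * α) ^ ((N : ℝ) - 1) := by positivity
  have hβ : 0 ≤ (N : ℝ) * (2 * α - 1) := mul_nonneg hN₀.le (by linarith)
  have hp : 0 ≤ 1 / (N : ℝ) := by positivity
  have hg : ∀ t, HasDerivAt g
      ((1 + (2 * α) ^ ((N : ℝ) - 1) * |g t| ^ ((N : ℝ) * (2 * α - 1))) ^ (-(1 / (N : ℝ)))) t := by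
    intro t
    rw [← hg_deriv]
    refine (differentiableAt_of_deriv_ne_zero ?_).hasDerivAt
    rw [hg_deriv]
    exact (rpow_pos_of_pos (zero_lt_one.trans_le (one_le_one_add_mul_abs_rpow hc _)) _).ne'
  have hlower := le_mul_mul_rpow_neg hc hβ hp hg hg_zero ht
  have hupper := mul_rpow_neg_le hc hβ hp hg hg_zero ht
  have h2α : 1 + 1 / (N : ℝ) * ((N : ℝ) * (2 * α - 1)) = 2 * α := by field_simp; ring
  rw [h2α, ← hg_deriv] at hlower
  rw [← hg_deriv] at hupper
  constructor <;> nlinarith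

theorem g_four (N : ℕ) (hN : 2 ≤ N) (α : ℝ) (hα : 1 / 2 < α)
    (g : ℝ → ℝ) (hg_diff : Differentiable ℝ g) (hg_zero : g 0 = 0)
    (hg_odd : ∀ t : ℝ, g (-t) = -g t)
    (hg_deriv : ∀ t : ℝ, deriv g t =
      (1 + (2 * α) ^ ((N : ℝ) - 1) * |g t| ^ ((N : ℝ) * (2 * α - 1))) ^ (-(1 / (N : ℝ))))
    : ∀ t : ℝ, 0 < t →
      (1 / 2) * g t ≤ α * t * deriv g t ∧ α * t * deriv g t ≤ α * g t :=
  g_four_general N hN α hα g hg_zero hg_deriv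
end

section
/- For every t ∈ ℝ one has |g(t)| ≤ (2α)^{1/(2Nα)} |t|^{1/(2α)} (property (g_6) of Lemma 2.1). -/
/-!
Write `T = 2α`. For `s > 0` we have `g s > 0`, and with `u = T g(s)^(T-1)` the equation reads
`g' = (1 + u^N / T)^(-1/N) ≤ (u^N / T)^(-1/N) = T^(1/N) / u`, i.e. `(g^T)' = u g' ≤ T^(1/N)`.
Integrating from `0` gives `g(t)^T ≤ T^(1/N) t` for `t ≥ 0`; taking `T`-th roots gives the bound
there, and oddness of `g` gives it for `t ≤ 0`.
-/

open Real Set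

lemma rpow_le_mul_of_deriv_rpow_le {g : ℝ → ℝ} {p c : ℝ} (hp : 1 ≤ p) (hg : Differentiable ℝ g)
    (hg0 : g 0 = 0) (hbound : ∀ s > 0, p * g s ^ (p - 1) * deriv g s ≤ c) {t : ℝ} (ht : 0 ≤ t) :
    g t ^ p ≤ c * t := by
  have hderiv (s : ℝ) : HasDerivAt (fun s ↦ g s ^ p) (p * g s ^ (p - 1) * deriv g s) s :=
    (hasDerivAt_rpow_const (Or.inr hp)).comp s (hg s).hasDerivAt
  have hgrowth := (convex_Ici 0).image_sub_le_mul_sub_of_deriv_le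
    (fun s _ ↦ (hderiv s).continuousAt.continuousWithinAt)
    (fun s _ ↦ (hderiv s).differentiableAt.differentiableWithinAt)
    (fun s hs ↦ by rw [interior_Ici] at hs; rw [(hderiv s).deriv]; exact hbound s hs)
    0 self_mem_Ici t ht ht
  simpa [hg0, zero_rpow (by linarith : p ≠ 0)] using hgrowth

lemma mul_one_add_rpow_div_rpow_neg_inv_le {u T N : ℝ} (hu : 0 < u) (hT : 0 < T) (hN : 0 < N) :
    u * (1 + u ^ N / T) ^ (-(1 / N)) ≤ T ^ (1 / N) := by
  have hroot : (u ^ N / T) ^ (1 / N) = u / T ^ (1 / N) := by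
    rw [div_rpow (by positivity) hT.le, one_div, rpow_rpow_inv hu.le hN.ne']
  calc u * (1 + u ^ N / T) ^ (-(1 / N))
      ≤ u * (u ^ N / T) ^ (-(1 / N)) := by
        gcongr u * ?_
        exact rpow_le_rpow_of_nonpos (by positivity) (by linarith) (neg_nonpos.2 (by positivity))
    _ = T ^ (1 / N) := by
        rw [rpow_neg (by positivity), hroot]
        field_simp

lemma rpow_sub_one_mul_rpow_eq_mul_rpow_div {T y N : ℝ} (hT : 0 < T) (hy : 0 ≤ y) :
    T ^ (N - 1) * y ^ (N * (T - 1)) = (T * y ^ (T - 1)) ^ N / T := by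
  rw [mul_rpow hT.le (rpow_nonneg hy _), ← rpow_mul hy, rpow_sub_one hT.ne', mul_comm (T - 1)]
  ring

lemma le_rpow_mul_rpow_of_rpow_le_mul {x y c p : ℝ} (hx : 0 ≤ x) (hy : 0 ≤ y) (hc : 0 ≤ c)
    (hp : 0 < p) (h : x ^ p ≤ c * y) : x ≤ c ^ (1 / p) * y ^ (1 / p) := by
  rwa [← mul_rpow hc hy, one_div, le_rpow_inv_iff_of_pos hx (by positivity) hp]

theorem g_six (N : ℕ) (hN : 2 ≤ N) (α : ℝ) (hα : 1 / 2 < α)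
    (g : ℝ → ℝ) (hg_diff : Differentiable ℝ g) (hg_zero : g 0 = 0)
    (hg_odd : ∀ t : ℝ, g (-t) = -g t)
    (hg_deriv : ∀ t : ℝ, deriv g t =
      (1 + (2 * α) ^ ((N : ℝ) - 1) * |g t| ^ ((N : ℝ) * (2 * α - 1))) ^ (-(1 / (N : ℝ))))
    : ∀ t : ℝ, |g t| ≤ (2 * α) ^ (1 / (2 * (N : ℝ) * α)) * |t| ^ (1 / (2 * α)) := by
  have hT : 1 < 2 * α := by linarith
  have hT0 : 0 < 2 * α := by linarith
  have hN0 : (0 : ℝ) < N := by exact_mod_cast (by omega : 0 < N)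
  have hmono : StrictMono g := strictMono_of_deriv_pos fun t ↦ by
    rw [hg_deriv]
    exact rpow_pos_of_pos (by positivity) _
  have hbound : ∀ s > 0, 2 * α * g s ^ (2 * α - 1) * deriv g s ≤ (2 * α) ^ (1 / (N : ℝ)) := by
    intro s hs
    have hgs : 0 < g s := hg_zero ▸ hmono hs
    rw [hg_deriv, abs_of_pos hgs, rpow_sub_one_mul_rpow_eq_mul_rpow_div hT0 hgs.le]
    exact mul_one_add_rpow_div_rpow_neg_inv_le (by positivity) hT0 hN0
  have hC : ((2 * α) ^ (1 / (N : ℝ))) ^ (1 / (2 * α)) = (2 * α) ^ (1 / (2 * (N : ℝ) * α)) := by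
    rw [← rpow_mul hT0.le]
    congr 1
    field_simp
  have hnonneg (t : ℝ) (ht : 0 ≤ t) :
      |g t| ≤ (2 * α) ^ (1 / (2 * (N : ℝ) * α)) * |t| ^ (1 / (2 * α)) := by
    have hgt : 0 ≤ g t := hg_zero ▸ hmono.monotone ht
    rw [abs_of_nonneg hgt, abs_of_nonneg ht, ← hC]
    exact le_rpow_mul_rpow_of_rpow_le_mul hgt ht (by positivity) hT0
      (rpow_le_mul_of_deriv_rpow_le hT.le hg_diff hg_zero hbound ht)
  intro t
  rcases le_total 0 t with ht | ht
  · exact hnonneg t ht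
  · simpa [hg_odd] using hnonneg (-t) (neg_nonneg.2 ht)
end

section
/- The limit lim_{t → ∞} g(t) / t^{1/(2α)} = (2α)^{1/(2Nα)} holds (property (g_7) of Lemma 2.1). -/
/-! With `φ = g ^ (2α)` and `u = g ^ (N (2α - 1))`, the ODE gives
`φ' = 2α (u / (1 + (2α)^(N-1) u)) ^ (1/N)`. Since `g' > 0` is a continuous function of `g`, the
solution cannot stay bounded, so `u → ∞` and `φ' → (2α)^(1/N)`. By the mean value theorem
`φ t / t` has the same limit, and taking `2α`-th roots gives the claim. -/

open Real Filter Set Topology Asymptotics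

lemma isLittleO_id_of_tendsto_deriv_zero {f f' : ℝ → ℝ}
    (hf : ∀ᶠ x in atTop, HasDerivAt f (f' x) x) (hf' : Tendsto f' atTop (𝓝 0)) :
    f =o[atTop] id := by
  refine isLittleO_iff.2 fun c hc => ?_
  have hsmall : ∀ᶠ x in atTop, ‖f' x‖ ≤ c / 2 :=
    (by simpa using hf'.norm : Tendsto (‖f' ·‖) atTop (𝓝 0)).eventually
      (eventually_le_nhds (half_pos hc))
  obtain ⟨T, hT⟩ := eventually_atTop.1 ((hf.and hsmall).and (eventually_ge_atTop 0))
  have hmvt : ∀ t ≥ T, ‖f t - f T‖ ≤ c / 2 * ‖t - T‖ := fun t ht =>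
    (convex_Ici T).norm_image_sub_le_of_norm_hasDerivWithin_le
      (fun x hx => (hT x hx).1.1.hasDerivWithinAt) (fun x hx => (hT x hx).1.2)
      self_mem_Ici ht
  have hT0 : 0 ≤ T := (hT T le_rfl).2
  filter_upwards [eventually_ge_atTop T, eventually_ge_atTop (2 * ‖f T‖ / c)] with t ht hct
  have h := hmvt t ht
  rw [Real.norm_of_nonneg (sub_nonneg.2 ht)] at h
  rw [div_le_iff₀ hc] at hct
  rw [id, Real.norm_of_nonneg (hT0.trans ht)]
  nlinarith [norm_sub_norm_le (f t) (f T), mul_nonneg hc.le hT0]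

theorem tendsto_div_self_of_tendsto_deriv {f f' : ℝ → ℝ} {L : ℝ}
    (hf : ∀ᶠ x in atTop, HasDerivAt f (f' x) x) (hf' : Tendsto f' atTop (𝓝 L)) :
    Tendsto (fun t => f t / t) atTop (𝓝 L) := by
  have hsub : (fun x => f x - L * x) =o[atTop] id :=
    isLittleO_id_of_tendsto_deriv_zero (f' := fun x => f' x - L)
      (hf.mono fun x hx => (hx.sub ((hasDerivAt_id' x).const_mul L)).congr_deriv (by ring))
      (by simpa using hf'.sub_const L)
  refine (by simpa using hsub.tendsto_div_nhds_zero.add_const L :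
    Tendsto (fun x => (f x - L * x) / x + L) atTop (𝓝 L)).congr' ?_
  filter_upwards [eventually_ne_atTop 0] with t ht
  field_simp
  ring

/-- If `g` converged to `l`, then `g t / t` would tend both to `0` and to `F l > 0`. -/
theorem tendsto_atTop_of_hasDerivAt_comp {F g : ℝ → ℝ} (hF : Continuous F)
    (hF_pos : ∀ y, 0 < F y) (hg : ∀ t, HasDerivAt g (F (g t)) t) : Tendsto g atTop atTop := by
  have hmono : Monotone g := (strictMono_of_hasDerivAt_pos hg fun t => hF_pos (g t)).monotone
  refine (tendsto_atTop_of_monotone hmono).resolve_right ?_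
  rintro ⟨l, hl⟩
  have hslope : Tendsto (fun t => g t / t) atTop (𝓝 (F l)) :=
    tendsto_div_self_of_tendsto_deriv (Eventually.of_forall hg) ((hF.tendsto l).comp hl)
  exact (hF_pos l).ne' (tendsto_nhds_unique hslope (hl.div_atTop tendsto_id))

section

variable {K β : ℝ}

lemma one_add_mul_abs_rpow_pos_s5 (hK : 0 ≤ K) (y : ℝ) : 0 < 1 + K * |y| ^ β :=
  add_pos_of_pos_of_nonneg one_pos (mul_nonneg hK (rpow_nonneg (abs_nonneg y) _))

lemma continuous_one_add_mul_abs_rpow_rpow (hK : 0 ≤ K) (hβ : 0 ≤ β) (p : ℝ) :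
    Continuous fun y : ℝ => (1 + K * |y| ^ β) ^ p :=
  (continuous_const.add (continuous_const.mul (continuous_abs.rpow_const
    fun _ => Or.inr hβ))).rpow_const fun y => Or.inl (one_add_mul_abs_rpow_pos_s5 hK y).ne'

end

lemma rpow_mul_one_add_rpow_neg {n r K y : ℝ} (hn : n ≠ 0) (hK : 0 < K) (hy : 0 < y) :
    y ^ r * (1 + K * y ^ (n * r)) ^ (-(1 / n)) = ((y ^ (n * r))⁻¹ + K) ^ (-(1 / n)) := by
  have hu : 0 < y ^ (n * r) := rpow_pos_of_pos hy _
  have hsplit : (y ^ (n * r))⁻¹ + K = (y ^ (n * r))⁻¹ * (1 + K * y ^ (n * r)) := by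
    field_simp
  rw [hsplit, mul_rpow (inv_nonneg.2 hu.le) (by positivity), inv_rpow hu.le, ← rpow_neg hu.le,
    ← rpow_mul hy.le, neg_neg, mul_right_comm, mul_one_div_cancel hn, one_mul]

lemma tendsto_rpow_mul_one_add_rpow_neg {n r K : ℝ} (hn : 0 < n) (hr : 0 < r) (hK : 0 < K) :
    Tendsto (fun y => y ^ r * (1 + K * y ^ (n * r)) ^ (-(1 / n))) atTop
      (𝓝 (K ^ (-(1 / n)))) := by
  have hu : Tendsto (fun y : ℝ => (y ^ (n * r))⁻¹ + K) atTop (𝓝 K) := by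
    simpa using ((tendsto_rpow_atTop (mul_pos hn hr)).inv_tendsto_atTop).add_const K
  refine (hu.rpow_const (Or.inl hK.ne')).congr' ?_
  filter_upwards [eventually_gt_atTop 0] with y hy
  exact (rpow_mul_one_add_rpow_neg hn.ne' hK hy).symm

lemma mul_rpow_sub_one_rpow_neg_one_div {a n : ℝ} (ha : 0 < a) (hn : n ≠ 0) :
    a * (a ^ (n - 1)) ^ (-(1 / n)) = a ^ (1 / n) := by
  have hexp : 1 + (n - 1) * -(1 / n) = 1 / n := by
    field_simp
    ring
  rw [← rpow_mul ha.le, ← rpow_one_add' ha.le (by rw [hexp]; exact one_div_ne_zero hn), hexp]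

lemma tendsto_div_rpow_of_tendsto_rpow_div {f : ℝ → ℝ} {p L : ℝ} (hp : 0 < p)
    (hf : ∀ᶠ t in atTop, 0 ≤ f t) (h : Tendsto (fun t => f t ^ p / t) atTop (𝓝 L)) :
    Tendsto (fun t => f t / t ^ (1 / p)) atTop (𝓝 (L ^ (1 / p))) := by
  refine (h.rpow_const (Or.inr (by positivity))).congr' ?_
  filter_upwards [hf, eventually_ge_atTop 0] with t hft ht
  rw [div_rpow (by positivity) ht, one_div, rpow_rpow_inv hft hp.ne']

theorem g_seven_general (N : ℕ) (hN : 2 ≤ N) (α : ℝ) (hα : 1 / 2 < α)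
    (g : ℝ → ℝ) (hg_diff : Differentiable ℝ g)
    (hg_deriv : ∀ t : ℝ, deriv g t =
      (1 + (2 * α) ^ ((N : ℝ) - 1) * |g t| ^ ((N : ℝ) * (2 * α - 1))) ^ (-(1 / (N : ℝ))))
    : Filter.Tendsto (fun t : ℝ => g t / t ^ (1 / (2 * α))) Filter.atTop
      (nhds ((2 * α) ^ (1 / (2 * (N : ℝ) * α)))) := by
  have hN0 : (0 : ℝ) < N := Nat.cast_pos.2 (by omega)
  have h2α : 0 < 2 * α := by linarith
  set K := (2 * α) ^ ((N : ℝ) - 1)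
  have hK : 0 < K := rpow_pos_of_pos h2α _
  set F : ℝ → ℝ := fun y => (1 + K * |y| ^ ((N : ℝ) * (2 * α - 1))) ^ (-(1 / (N : ℝ)))
  have hg : ∀ t, HasDerivAt g (F (g t)) t := fun t =>
    (hg_diff t).hasDerivAt.congr_deriv (hg_deriv t)
  have htop : Tendsto g atTop atTop := tendsto_atTop_of_hasDerivAt_comp
    (continuous_one_add_mul_abs_rpow_rpow hK.le (mul_nonneg hN0.le (by linarith)) _)
    (fun y => rpow_pos_of_pos (one_add_mul_abs_rpow_pos_s5 hK.le y) _) hg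
  have hpos : ∀ᶠ t in atTop, 0 < g t := htop.eventually_gt_atTop 0
  have hφ : ∀ᶠ t in atTop, HasDerivAt (fun t => g t ^ (2 * α))
      (F (g t) * (2 * α) * g t ^ (2 * α - 1)) t :=
    hpos.mono fun t ht => (hg t).rpow_const (Or.inl ht.ne')
  have hφ' : Tendsto (fun t => F (g t) * (2 * α) * g t ^ (2 * α - 1)) atTop
      (𝓝 ((2 * α) ^ (1 / (N : ℝ)))) := by
    rw [← mul_rpow_sub_one_rpow_neg_one_div h2α hN0.ne']
    refine (((tendsto_rpow_mul_one_add_rpow_neg (r := 2 * α - 1) hN0 (by linarith) hK).comp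
      htop).const_mul (2 * α)).congr' ?_
    filter_upwards [hpos] with t ht
    simp only [F, Function.comp, abs_of_pos ht]
    ring
  convert tendsto_div_rpow_of_tendsto_rpow_div h2α (hpos.mono fun _ => le_of_lt)
    (tendsto_div_self_of_tendsto_deriv hφ hφ') using 2
  rw [← rpow_mul h2α.le]
  congr 1
  field_simp

theorem g_seven (N : ℕ) (hN : 2 ≤ N) (α : ℝ) (hα : 1 / 2 < α)
    (g : ℝ → ℝ) (hg_diff : Differentiable ℝ g) (hg_zero : g 0 = 0)
    (hg_odd : ∀ t : ℝ, g (-t) = -g t)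
    (hg_deriv : ∀ t : ℝ, deriv g t =
      (1 + (2 * α) ^ ((N : ℝ) - 1) * |g t| ^ ((N : ℝ) * (2 * α - 1))) ^ (-(1 / (N : ℝ))))
    : Filter.Tendsto (fun t : ℝ => g t / t ^ (1 / (2 * α))) Filter.atTop
      (nhds ((2 * α) ^ (1 / (2 * (N : ℝ) * α)))) :=
  g_seven_general N hN α hα g hg_diff hg_deriv
end

section
/- For every t ∈ ℝ with |t| ≤ 1 one has |g(t)| ≥ g(1)·|t|, and for every t ∈ ℝ with |t| ≥ 1 one has |g(t)| ≥ g(1)·|t|^{1/(2α)} (property (g_8) of Lemma 2.1). -/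
open Real Filter Set

theorem g_eight (N : ℕ) (hN : 2 ≤ N) (α : ℝ) (hα : 1 / 2 < α)
    (g : ℝ → ℝ) (hg_diff : Differentiable ℝ g) (hg_zero : g 0 = 0)
    (hg_odd : ∀ t : ℝ, g (-t) = -g t)
    (hg_deriv : ∀ t : ℝ, deriv g t =
      (1 + (2 * α) ^ ((N : ℝ) - 1) * |g t| ^ ((N : ℝ) * (2 * α - 1))) ^ (-(1 / (N : ℝ))))
    : (∀ t : ℝ, |t| ≤ 1 → g 1 * |t| ≤ |g t|) ∧
      (∀ t : ℝ, 1 ≤ |t| → g 1 * |t| ^ (1 / (2 * α)) ≤ |g t|) := by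
  have hN0 : (0:ℝ) < (N:ℝ) := by exact_mod_cast Nat.lt_of_lt_of_le Nat.zero_lt_two hN
  have hα1 : (1:ℝ) < 2 * α := by linarith
  set c : ℝ := (2 * α) ^ ((N : ℝ) - 1) with hc_def
  have hc : 0 < c := rpow_pos_of_pos (by linarith) _
  set p : ℝ := (N : ℝ) * (2 * α - 1) with hp_def
  have hp : 0 ≤ p := by
    apply mul_nonneg hN0.le; linarith
  -- derivative is positive
  have hderiv_pos : ∀ t, 0 < deriv g t := by
    intro t
    rw [hg_deriv]
    apply rpow_pos_of_pos
    have : 0 ≤ c * |g t| ^ p := by positivity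
    linarith
  have hmono : StrictMono g := strictMono_of_deriv_pos hderiv_pos
  have hg_nonneg : ∀ t : ℝ, 0 ≤ t → 0 ≤ g t := by
    intro t ht
    rw [← hg_zero]; exact hmono.monotone ht
  have habs : ∀ t : ℝ, |g t| = g |t| := by
    intro t
    rcases le_or_gt 0 t with h | h
    · rw [abs_of_nonneg h, abs_of_nonneg (hg_nonneg t h)]
    · have h1 : g t < 0 := by rw [← hg_zero]; exact hmono h
      rw [abs_of_neg h, abs_of_neg h1]
      rw [hg_odd]
  -- deriv antitone on [0,∞)
  have hanti : ∀ s t : ℝ, 0 ≤ s → s ≤ t → deriv g t ≤ deriv g s := by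
    intro s t hs hst
    rw [hg_deriv, hg_deriv]
    have hle : |g s| ≤ |g t| := by
      rw [habs, habs, abs_of_nonneg hs, abs_of_nonneg (hs.trans hst)]
      exact hmono.monotone hst
    apply rpow_le_rpow_of_nonpos (by positivity)
    · have h2 : c * |g s| ^ p ≤ c * |g t| ^ p :=
        mul_le_mul_of_nonneg_left (rpow_le_rpow (abs_nonneg _) hle hp) hc.le
      linarith
    · rw [neg_nonpos]
      positivity
  -- Part 1 via concavity
  have hconc : ConcaveOn ℝ (Ici (0:ℝ)) g := by
    apply AntitoneOn.concaveOn_of_deriv (convex_Ici 0) hg_diff.continuous.continuousOn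
      hg_diff.differentiableOn
    intro s hs t ht hst
    rw [interior_Ici] at hs ht
    exact hanti s t (le_of_lt hs) hst
  have part1 : ∀ t : ℝ, 0 ≤ t → t ≤ 1 → g 1 * t ≤ g t := by
    intro t ht0 ht1
    have key := hconc.2 (mem_Ici.2 zero_le_one) (mem_Ici.2 le_rfl) ht0
      (by linarith : (0:ℝ) ≤ 1 - t) (by ring)
    simp only [smul_eq_mul, mul_one, mul_zero, hg_zero, add_zero] at key
    linarith [key]
  -- Part 2 setup : ψ = g ^ (2α)
  set ψ : ℝ → ℝ := fun t => g t ^ (2 * α) with hψ_def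
  set D : ℝ → ℝ := fun t => deriv g t * (2 * α) * g t ^ (2 * α - 1) with hD_def
  have hψd : ∀ t : ℝ, HasDerivAt ψ (D t) t := by
    intro t
    exact ((hg_diff t).hasDerivAt).rpow_const (Or.inr hα1.le)
  have hD_nonneg : ∀ t : ℝ, 0 ≤ t → 0 ≤ D t := by
    intro t ht
    have h1 := (hderiv_pos t).le
    have h2 : (0:ℝ) ≤ g t ^ (2 * α - 1) := rpow_nonneg (hg_nonneg t ht) _
    positivity
  -- D u ^ N formula
  have hDpow : ∀ u : ℝ, 0 ≤ u →
      (D u) ^ N = (2 * α) ^ N * (g u ^ p) / (1 + c * g u ^ p) := by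
    intro u hu
    have hgu : 0 ≤ g u := hg_nonneg u hu
    have hbase : (0:ℝ) < 1 + c * (g u) ^ p := by positivity
    have habs' : |g u| = g u := abs_of_nonneg hgu
    rw [hD_def]
    simp only [hg_deriv, habs']
    rw [mul_pow, mul_pow]
    have e1 : ((1 + c * g u ^ p) ^ (-(1 / (N:ℝ)))) ^ N = (1 + c * g u ^ p)⁻¹ := by
      rw [← rpow_natCast ((1 + c * g u ^ p) ^ (-(1 / (N:ℝ)))) N, ← rpow_mul hbase.le]
      rw [show (-(1 / (N:ℝ))) * (N:ℝ) = -1 by field_simp]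
      rw [rpow_neg_one]
    have e2 : (g u ^ (2 * α - 1)) ^ N = g u ^ p := by
      rw [← rpow_natCast (g u ^ (2 * α - 1)) N, ← rpow_mul hgu, hp_def, mul_comm]
    rw [e1, e2]
    ring
  -- D monotone on [0,∞)
  have hDmono : ∀ s t : ℝ, 0 ≤ s → s ≤ t → D s ≤ D t := by
    intro s t hs hst
    have ht : 0 ≤ t := hs.trans hst
    have hvle : g s ^ p ≤ g t ^ p :=
      rpow_le_rpow (hg_nonneg s hs) (hmono.monotone hst) hp
    have hvs : 0 ≤ g s ^ p := rpow_nonneg (hg_nonneg s hs) _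
    have hvt : 0 ≤ g t ^ p := rpow_nonneg (hg_nonneg t ht) _
    have hNne : N ≠ 0 := by omega
    refine le_of_pow_le_pow_left₀ hNne (hD_nonneg t ht) ?_
    rw [hDpow s hs, hDpow t ht]
    have h1 : (0:ℝ) < 1 + c * g s ^ p := by positivity
    have h2 : (0:ℝ) < 1 + c * g t ^ p := by positivity
    rw [div_le_div_iff₀ h1 h2]
    have hA : (0:ℝ) ≤ (2 * α) ^ N := by positivity
    nlinarith [mul_le_mul_of_nonneg_left hvle hA, mul_nonneg hA (mul_nonneg hc.le (mul_nonneg hvs hvt))]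
  have hψ0 : ψ 0 = 0 := by
    rw [hψ_def]; simp only [hg_zero]
    exact zero_rpow (by linarith)
  have hψcont : Continuous ψ := by
    have : Differentiable ℝ ψ := fun t => (hψd t).differentiableAt
    exact this.continuous
  -- ψ 1 ≤ D 1
  have hψ1_le : ψ 1 ≤ D 1 := by
    obtain ⟨ξ, hξ, hξeq⟩ := exists_hasDerivAt_eq_slope ψ D (by norm_num : (0:ℝ) < 1)
      hψcont.continuousOn (fun x _ => hψd x)
    have : D ξ = ψ 1 := by rw [hξeq, hψ0]; ring
    rw [← this]
    exact hDmono ξ 1 hξ.1.le hξ.2.le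
  -- key inequality
  have hkey : ∀ t : ℝ, 1 ≤ t → ψ 1 * t ≤ ψ t := by
    intro t ht
    rcases eq_or_lt_of_le ht with h | h
    · rw [← h, mul_one]
    · obtain ⟨ξ, hξ, hξeq⟩ := exists_hasDerivAt_eq_slope ψ D h
        hψcont.continuousOn (fun x _ => hψd x)
      have hD1 : D 1 ≤ D ξ := hDmono 1 ξ zero_le_one hξ.1.le
      have htne : t - 1 ≠ 0 := by linarith
      have heq : ψ t - ψ 1 = D ξ * (t - 1) := by
        rw [hξeq]; field_simp
      have hprod : 0 ≤ (D ξ - ψ 1) * (t - 1) :=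
        mul_nonneg (by linarith [hψ1_le, hD1]) (by linarith)
      nlinarith [hprod, heq]
  constructor
  · intro t ht
    rw [habs]
    exact part1 |t| (abs_nonneg t) ht
  · intro t ht
    rw [habs]
    have hs1 : (1:ℝ) ≤ |t| := ht
    have hs0 : (0:ℝ) ≤ |t| := by linarith
    have h2α : (0:ℝ) < 2 * α := by linarith
    have hg1 : 0 ≤ g 1 := hg_nonneg 1 zero_le_one
    have hgs : 0 ≤ g |t| := hg_nonneg _ hs0
    rw [← rpow_le_rpow_iff (by positivity) hgs h2α]
    have hlhs : (g 1 * |t| ^ (1 / (2 * α))) ^ (2 * α) = ψ 1 * |t| := by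
      rw [mul_rpow hg1 (rpow_nonneg hs0 _), ← rpow_mul hs0]
      rw [show 1 / (2 * α) * (2 * α) = 1 by field_simp, rpow_one]
    rw [hlhs]
    exact hkey |t| hs1
end

section
/- For every t ≠ 0 the derivative g' is differentiable at t, and the second derivative satisfies g''(t) < 0 when t > 0 and g''(t) > 0 when t < 0 (property (g_9) of Lemma 2.1). -/
open Real Filter Set
open Topology

lemma g_nine_aux (c p e : ℝ) (hc : 0 < c) (u : ℝ → ℝ) (t u' : ℝ)
    (hu : HasDerivAt u u' t) (hut : 0 < u t) :
    HasDerivAt (fun s => (1 + c * u s ^ p) ^ e)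
      (e * (1 + c * u t ^ p) ^ (e - 1) * (c * (p * u t ^ (p - 1) * u'))) t := by
  have hpow : HasDerivAt (fun s => u s ^ p) (p * u t ^ (p - 1) * u') t :=
    (Real.hasDerivAt_rpow_const (Or.inl hut.ne')).comp t hu
  have hinner : HasDerivAt (fun s => 1 + c * u s ^ p) (c * (p * u t ^ (p - 1) * u')) t :=
    (hpow.const_mul c).const_add 1
  have hx0 : (0 : ℝ) < 1 + c * u t ^ p := by
    have := Real.rpow_pos_of_pos hut p
    nlinarith
  exact (Real.hasDerivAt_rpow_const (p := e) (Or.inl hx0.ne')).comp t hinner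

theorem g_nine (N : ℕ) (hN : 2 ≤ N) (α : ℝ) (hα : 1 / 2 < α)
    (g : ℝ → ℝ) (hg_diff : Differentiable ℝ g) (hg_zero : g 0 = 0)
    (hg_odd : ∀ t : ℝ, g (-t) = -g t)
    (hg_deriv : ∀ t : ℝ, deriv g t =
      (1 + (2 * α) ^ ((N : ℝ) - 1) * |g t| ^ ((N : ℝ) * (2 * α - 1))) ^ (-(1 / (N : ℝ))))
    : ∀ t : ℝ, t ≠ 0 →
      DifferentiableAt ℝ (deriv g) t ∧
        (0 < t → deriv (deriv g) t < 0) ∧ (t < 0 → 0 < deriv (deriv g) t) := by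
  set c : ℝ := (2 * α) ^ ((N : ℝ) - 1) with hc_def
  set p : ℝ := (N : ℝ) * (2 * α - 1) with hp_def
  set e : ℝ := -(1 / (N : ℝ)) with he_def
  have hN0 : (0 : ℝ) < N := by positivity
  have hc : 0 < c := Real.rpow_pos_of_pos (by linarith) _
  have hp : 0 < p := by
    have : (0:ℝ) < 2 * α - 1 := by linarith
    positivity
  have he : e < 0 := by
    rw [he_def]
    simp only [neg_lt, neg_zero]
    positivity
  have hpos : ∀ s, 0 < deriv g s := by
    intro s
    rw [hg_deriv s]
    apply Real.rpow_pos_of_pos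
    have h1 : 0 ≤ |g s| ^ ((N:ℝ) * (2 * α - 1)) := Real.rpow_nonneg (abs_nonneg _) _
    nlinarith
  have hmono : StrictMono g := strictMono_of_deriv_pos hpos
  intro t ht
  have hg' : HasDerivAt g (deriv g t) t := (hg_diff t).hasDerivAt
  rcases ht.lt_or_gt with htneg | htpos
  · -- t < 0, g t < 0
    have hgt : g t < 0 := by
      have := hmono htneg; rwa [hg_zero] at this
    have hev : ∀ᶠ s in 𝓝 t, g s < 0 :=
      (hg_diff t).continuousAt.preimage_mem_nhds (isOpen_Iio.mem_nhds hgt)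
    have heq : deriv g =ᶠ[𝓝 t] fun s => (1 + c * (-g s) ^ p) ^ e := by
      filter_upwards [hev] with s hs
      rw [hg_deriv s, abs_of_neg hs]
    have hderiv := g_nine_aux c p e hc (fun s => -g s) t (-(deriv g t)) hg'.neg
      (by simpa using hgt.le.lt_of_ne (by simpa using hgt.ne))
    have hderiv := g_nine_aux c p e hc (fun s => -g s) t (-(deriv g t)) hg'.neg
      (neg_pos.mpr hgt)
    have hdiff : DifferentiableAt ℝ (deriv g) t :=
      heq.differentiableAt_iff.mpr hderiv.differentiableAt
    refine ⟨hdiff, fun h => absurd h (not_lt.mpr htneg.le), fun _ => ?_⟩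
    have hval : deriv (deriv g) t =
        e * (1 + c * (-g t) ^ p) ^ (e - 1) * (c * (p * (-g t) ^ (p - 1) * (-(deriv g t)))) := by
      rw [heq.deriv_eq, hderiv.deriv]
    rw [hval]
    have h1 : 0 < (1 + c * (-g t) ^ p) ^ (e - 1) := by
      apply Real.rpow_pos_of_pos
      have := Real.rpow_pos_of_pos (neg_pos.mpr hgt) p
      nlinarith
    have h2 : 0 < (-g t) ^ (p - 1) := Real.rpow_pos_of_pos (neg_pos.mpr hgt) _
    have h3 := hpos t
    have hneg1 : e * (1 + c * (-g t) ^ p) ^ (e - 1) < 0 := mul_neg_of_neg_of_pos he h1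
    have hneg2 : c * (p * (-g t) ^ (p - 1) * (-(deriv g t))) < 0 := by
      apply mul_neg_of_pos_of_neg hc
      apply mul_neg_of_pos_of_neg (by positivity)
      linarith
    exact mul_pos_of_neg_of_neg hneg1 hneg2
  · -- t > 0, g t > 0
    have hgt : 0 < g t := by
      have := hmono htpos; rwa [hg_zero] at this
    have hev : ∀ᶠ s in 𝓝 t, 0 < g s :=
      (hg_diff t).continuousAt.preimage_mem_nhds (isOpen_Ioi.mem_nhds hgt)
    have heq : deriv g =ᶠ[𝓝 t] fun s => (1 + c * (g s) ^ p) ^ e := by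
      filter_upwards [hev] with s hs
      rw [hg_deriv s, abs_of_pos hs]
    have hderiv := g_nine_aux c p e hc g t (deriv g t) hg' hgt
    have hdiff : DifferentiableAt ℝ (deriv g) t :=
      heq.differentiableAt_iff.mpr hderiv.differentiableAt
    refine ⟨hdiff, fun _ => ?_, fun h => absurd h (not_lt.mpr htpos.le)⟩
    have hval : deriv (deriv g) t =
        e * (1 + c * (g t) ^ p) ^ (e - 1) * (c * (p * (g t) ^ (p - 1) * deriv g t)) := by
      rw [heq.deriv_eq, hderiv.deriv]
    rw [hval]
    have h1 : 0 < (1 + c * (g t) ^ p) ^ (e - 1) := by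
      apply Real.rpow_pos_of_pos
      have := Real.rpow_pos_of_pos hgt p
      nlinarith
    have h2 : 0 < (g t) ^ (p - 1) := Real.rpow_pos_of_pos hgt _
    have h3 := hpos t
    have hneg1 : e * (1 + c * (g t) ^ p) ^ (e - 1) < 0 := mul_neg_of_neg_of_pos he h1
    exact mul_neg_of_neg_of_pos hneg1 (by positivity)
end

section
/- For every ε ∈ (0,1) and every real s ≥ max{s_ε, 1}, one has g'(s) ≥ (1 − ε) / ((2α)^{(N−1)/N} (g(s))^{2α−1}); equivalently, the derivative of s ↦ g(s)^{2α}/(2α)^{1/N} at such s is at least 1 − ε. -/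
open Real Filter Set

set_option maxHeartbeats 1000000 in
theorem g_deriv_lower_estimate (N : ℕ) (hN : 2 ≤ N) (α : ℝ) (hα : 1 / 2 < α)
    (g : ℝ → ℝ) (hg_diff : Differentiable ℝ g) (hg_zero : g 0 = 0)
    (hg_odd : ∀ t : ℝ, g (-t) = -g t)
    (hg_deriv : ∀ t : ℝ, deriv g t =
      (1 + (2 * α) ^ ((N : ℝ) - 1) * |g t| ^ ((N : ℝ) * (2 * α - 1))) ^ (-(1 / (N : ℝ))))
    (B : ℝ) (hB : B = (2 * α) ^ ((N : ℝ) - 1) * (g 1) ^ ((2 * α - 1) * (N : ℝ)))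
    (s_ : ℝ → ℝ) (hs_ : ∀ δ : ℝ, s_ δ =
      ((1 - δ) ^ (N : ℝ) / ((1 - (1 - δ) ^ (N : ℝ)) * B)) ^ (2 * α / ((2 * α - 1) * (N : ℝ))))
    : ∀ ε : ℝ, 0 < ε → ε < 1 → ∀ s : ℝ, max (s_ ε) 1 ≤ s →
      (1 - ε) / ((2 * α) ^ (((N : ℝ) - 1) / (N : ℝ)) * (g s) ^ (2 * α - 1)) ≤ deriv g s ∧
        1 - ε ≤ deriv (fun s : ℝ => (g s) ^ (2 * α) / (2 * α) ^ ((1 : ℝ) / (N : ℝ))) s := by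
  have h2α : (0:ℝ) < 2 * α := by linarith
  have h2α1 : (1:ℝ) < 2 * α := by linarith
  have hN0 : (0:ℝ) < (N:ℝ) := by positivity
  have hNne : ((N:ℝ)) ≠ 0 := hN0.ne'
  set C0 : ℝ := (2 * α) ^ ((N : ℝ) - 1) with hC0def
  have hC0 : 0 < C0 := rpow_pos_of_pos h2α _
  -- derivative is positive
  have hderiv_pos : ∀ t : ℝ, 0 < deriv g t := by
    intro t
    rw [hg_deriv t]
    have h1 : (0:ℝ) ≤ C0 * |g t| ^ ((N:ℝ) * (2 * α - 1)) :=
      mul_nonneg hC0.le (rpow_nonneg (abs_nonneg _) _)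
    exact rpow_pos_of_pos (by linarith) _
  have hmono : StrictMono g :=
    strictMono_of_deriv_pos hderiv_pos
  have hg_pos : ∀ t : ℝ, 0 < t → 0 < g t := by
    intro t ht
    have := hmono ht
    rwa [hg_zero] at this
  have hg1 : 0 < g 1 := hg_pos 1 one_pos
  -- the function u = g^{2α}
  set u : ℝ → ℝ := fun t => g t ^ (2 * α) with hudef
  set u' : ℝ → ℝ := fun t => deriv g t * (2 * α) * g t ^ (2 * α - 1) with hu'def
  have hu : ∀ t : ℝ, HasDerivAt u (u' t) t := by
    intro t
    exact (hg_diff t).hasDerivAt.rpow_const (Or.inr (by linarith))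
  -- closed form of u' for positive t
  have hu'eq : ∀ t : ℝ, 0 < t → u' t =
      (1 + C0 * (g t) ^ ((N:ℝ) * (2 * α - 1))) ^ (-(1 / (N:ℝ))) * (2 * α) *
        g t ^ (2 * α - 1) := by
    intro t ht
    simp only [hu'def, hg_deriv t, abs_of_pos (hg_pos t ht)]
  -- core monotonicity
  have key : ∀ x y : ℝ, 0 < x → x ≤ y →
      x ^ (2 * α - 1) * (1 + C0 * x ^ ((N:ℝ) * (2 * α - 1))) ^ (-(1 / (N:ℝ))) ≤
      y ^ (2 * α - 1) * (1 + C0 * y ^ ((N:ℝ) * (2 * α - 1))) ^ (-(1 / (N:ℝ))) := by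
    intro x y hx hxy
    have hy : 0 < y := lt_of_lt_of_le hx hxy
    have hq : (0:ℝ) < 2 * α - 1 := by linarith
    set X := x ^ ((N:ℝ) * (2 * α - 1)) with hXdef
    set Y := y ^ ((N:ℝ) * (2 * α - 1)) with hYdef
    have hX : 0 < X := rpow_pos_of_pos hx _
    have hY : 0 < Y := rpow_pos_of_pos hy _
    have hXY : X ≤ Y := rpow_le_rpow hx.le hxy (by positivity)
    have hxX : x ^ (2 * α - 1) = X ^ ((1:ℝ)/(N:ℝ)) := by
      rw [hXdef, ← Real.rpow_mul hx.le]
      congr 1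
      field_simp
    have hyY : y ^ (2 * α - 1) = Y ^ ((1:ℝ)/(N:ℝ)) := by
      rw [hYdef, ← Real.rpow_mul hy.le]
      congr 1
      field_simp
    rw [hxX, hyY]
    have h1X : (0:ℝ) < 1 + C0 * X := by positivity
    have h1Y : (0:ℝ) < 1 + C0 * Y := by positivity
    have e1 : X ^ ((1:ℝ)/(N:ℝ)) * (1 + C0 * X) ^ (-(1 / (N:ℝ))) =
        (X / (1 + C0 * X)) ^ ((1:ℝ)/(N:ℝ)) := by
      rw [Real.div_rpow hX.le h1X.le, Real.rpow_neg h1X.le, div_eq_mul_inv]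
      ring
    have e2 : Y ^ ((1:ℝ)/(N:ℝ)) * (1 + C0 * Y) ^ (-(1 / (N:ℝ))) =
        (Y / (1 + C0 * Y)) ^ ((1:ℝ)/(N:ℝ)) := by
      rw [Real.div_rpow hY.le h1Y.le, Real.rpow_neg h1Y.le, div_eq_mul_inv]
      ring
    rw [e1, e2]
    apply Real.rpow_le_rpow (by positivity) _ (by positivity)
    rw [div_le_div_iff₀ h1X h1Y]
    nlinarith [mul_nonneg hC0.le (mul_nonneg hX.le hY.le)]
  have hu'_mono : ∀ x y : ℝ, 0 < x → x ≤ y → u' x ≤ u' y := by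
    intro x y hx hxy
    rw [hu'eq x hx, hu'eq y (lt_of_lt_of_le hx hxy)]
    have := key (g x) (g y) (hg_pos x hx) (hmono.le_iff_le.mpr hxy)
    nlinarith [this, h2α]
  -- u(0) = 0
  have hu0 : u 0 = 0 := by
    simp only [hudef, hg_zero]
    exact Real.zero_rpow (by positivity)
  -- MVT on [0,1]
  have hcontu : ∀ a b : ℝ, ContinuousOn u (Set.Icc a b) :=
    fun a b => fun t _ => ((hu t).continuousAt).continuousWithinAt
  obtain ⟨c, hc, hcval⟩ := exists_hasDerivAt_eq_slope u u' one_pos (hcontu 0 1)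
    (fun x _ => hu x)
  have hcval' : u' c = u 1 := by
    rw [hcval, hu0]; ring
  have hu'_ge : ∀ t : ℝ, 1 ≤ t → u 1 ≤ u' t := by
    intro t ht
    rw [← hcval']
    exact hu'_mono c t hc.1 (le_trans hc.2.le ht)
  -- growth: u s ≥ u 1 * s for s ≥ 1
  have hgrow : ∀ s : ℝ, 1 ≤ s → u 1 * s ≤ u s := by
    intro s hs
    rcases eq_or_lt_of_le hs with h | h
    · rw [← h, mul_one]
    · obtain ⟨d, hd, hdval⟩ := exists_hasDerivAt_eq_slope u u' h (hcontu 1 s)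
        (fun x _ => hu x)
      have h1 : u 1 ≤ (u s - u 1) / (s - 1) := by
        rw [← hdval]; exact hu'_ge d hd.1.le
      have h2 : u 1 * (s - 1) ≤ u s - u 1 :=
        (le_div_iff₀ (by linarith : (0:ℝ) < s - 1)).mp h1
      nlinarith [h2]
  -- main part
  intro ε hε0 hε1 s hs
  have hs1 : (1:ℝ) ≤ s := le_trans (le_max_right _ _) hs
  have hssε : s_ ε ≤ s := le_trans (le_max_left _ _) hs
  have hspos : (0:ℝ) < s := by linarith
  have hGpos : 0 < g s := hg_pos s hspos
  have hq : (0:ℝ) < 2 * α - 1 := by linarith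
  set E : ℝ := (1 - ε) ^ ((N:ℝ)) with hEdef
  have hE0 : 0 < E := rpow_pos_of_pos (by linarith) _
  have hE1 : E < 1 := by
    rw [hEdef]
    calc (1 - ε) ^ ((N:ℝ)) < 1 ^ ((N:ℝ)) :=
      Real.rpow_lt_rpow (by linarith) (by linarith) hN0
    _ = 1 := Real.one_rpow _
  have hBpos : 0 < B := by
    rw [hB]; exact mul_pos hC0 (rpow_pos_of_pos hg1 _)
  have hbase_pos : 0 < E / ((1 - E) * B) :=
    div_pos hE0 (mul_pos (by linarith) hBpos)
  have hsεpos : 0 < s_ ε := by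
    rw [hs_ ε]
    exact rpow_pos_of_pos hbase_pos _
  set r : ℝ := ((2 * α - 1) * (N:ℝ)) / (2 * α) with hrdef
  have hr : 0 < r := by positivity
  -- s_ ε ^ r = E / ((1 - E) * B)
  have hsεr : (s_ ε) ^ r = E / ((1 - E) * B) := by
    rw [hs_ ε, ← Real.rpow_mul hbase_pos.le]
    have : 2 * α / ((2 * α - 1) * (N:ℝ)) * r = 1 := by
      rw [hrdef]; field_simp
    rw [this, Real.rpow_one]
  -- the key bound on A := C0 * g s ^ ((N) * (2α-1))
  have hgrow_s : g 1 ^ (2 * α) * s ≤ g s ^ (2 * α) := hgrow s hs1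
  have hexp1 : 2 * α * r = (2 * α - 1) * (N:ℝ) := by
    rw [hrdef, mul_div_cancel₀ _ h2α.ne']
  have hexp2 : 2 * α * r = (N:ℝ) * (2 * α - 1) := by
    rw [hexp1]; ring
  have hpow : g 1 ^ ((2 * α - 1) * (N:ℝ)) * s ^ r ≤ g s ^ ((N:ℝ) * (2 * α - 1)) := by
    have h1 : (g 1 ^ (2 * α) * s) ^ r ≤ (g s ^ (2 * α)) ^ r :=
      Real.rpow_le_rpow (by positivity) hgrow_s hr.le
    have e1 : (g 1 ^ (2 * α) * s) ^ r = g 1 ^ ((2 * α - 1) * (N:ℝ)) * s ^ r := by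
      rw [Real.mul_rpow (by positivity) hspos.le, ← Real.rpow_mul hg1.le, hexp1]
    have e2 : (g s ^ (2 * α)) ^ r = g s ^ ((N:ℝ) * (2 * α - 1)) := by
      rw [← Real.rpow_mul hGpos.le, hexp2]
    rw [e1] at h1; rw [e2] at h1; exact h1
  have hsr : (s_ ε) ^ r ≤ s ^ r := Real.rpow_le_rpow hsεpos.le hssε hr.le
  set A : ℝ := C0 * g s ^ ((N:ℝ) * (2 * α - 1)) with hAdef
  have hApos : 0 < A := mul_pos hC0 (rpow_pos_of_pos hGpos _)
  have hgp : (0:ℝ) < g 1 ^ ((2 * α - 1) * (N:ℝ)) := rpow_pos_of_pos hg1 _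
  have hA_ge : E / (1 - E) ≤ A := by
    have h1 : g 1 ^ ((2 * α - 1) * (N:ℝ)) * (s_ ε) ^ r ≤ g s ^ ((N:ℝ) * (2 * α - 1)) :=
      le_trans (mul_le_mul_of_nonneg_left hsr hgp.le) hpow
    have h2 : C0 * (g 1 ^ ((2 * α - 1) * (N:ℝ)) * (s_ ε) ^ r) ≤ A :=
      mul_le_mul_of_nonneg_left h1 hC0.le
    rw [hsεr] at h2
    have hEne : (1:ℝ) - E ≠ 0 := by linarith
    calc E / (1 - E) = C0 * (g 1 ^ ((2 * α - 1) * (N:ℝ)) * (E / ((1 - E) * B))) := by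
          rw [hB]
          field_simp
    _ ≤ A := h2
  have hEA : E * (1 + A) ≤ A := by
    have h3 : E ≤ A * (1 - E) := (div_le_iff₀ (by linarith : (0:ℝ) < 1 - E)).mp hA_ge
    have h4 : E * (1 + A) - A = E - A * (1 - E) := by ring
    linarith
  have hE_rt : E ^ ((1:ℝ)/(N:ℝ)) = 1 - ε := by
    rw [hEdef, ← Real.rpow_mul (by linarith : (0:ℝ) ≤ 1 - ε), mul_one_div,
      div_self hNne, Real.rpow_one]
  have habs : |g s| = g s := abs_of_pos hGpos
  have hK_eq : (2 * α) ^ (((N:ℝ) - 1) / (N:ℝ)) * g s ^ (2 * α - 1) = A ^ ((1:ℝ)/(N:ℝ)) := by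
    have h1 : C0 ^ ((1:ℝ)/(N:ℝ)) = (2 * α) ^ (((N:ℝ) - 1) / (N:ℝ)) := by
      rw [hC0def, ← Real.rpow_mul h2α.le, mul_one_div]
    have h2' : (g s ^ ((N:ℝ) * (2 * α - 1))) ^ ((1:ℝ)/(N:ℝ)) = g s ^ (2 * α - 1) := by
      rw [← Real.rpow_mul hGpos.le]
      congr 1
      rw [mul_comm ((N:ℝ)) (2 * α - 1), mul_assoc, mul_one_div, div_self hNne, mul_one]
    rw [hAdef, Real.mul_rpow hC0.le (rpow_nonneg hGpos.le _), h1, h2']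
  have h1Apos : (0:ℝ) < 1 + A := by linarith
  have hpart1 : (1 - ε) / ((2 * α) ^ (((N:ℝ) - 1) / (N:ℝ)) * g s ^ (2 * α - 1)) ≤ deriv g s := by
    rw [hg_deriv s, habs, hK_eq]
    have lhs_eq : (1 - ε) / A ^ ((1:ℝ)/(N:ℝ)) = (E / A) ^ ((1:ℝ)/(N:ℝ)) := by
      rw [Real.div_rpow hE0.le hApos.le, hE_rt]
    have rhs_eq : (1 + A) ^ (-(1/(N:ℝ))) = ((1 + A)⁻¹) ^ ((1:ℝ)/(N:ℝ)) := by
      rw [Real.rpow_neg h1Apos.le, ← Real.inv_rpow h1Apos.le]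
    rw [lhs_eq, rhs_eq]
    apply Real.rpow_le_rpow (by positivity) _ (by positivity)
    rw [inv_eq_one_div, div_le_div_iff₀ hApos h1Apos]
    linarith [hEA]
  refine ⟨hpart1, ?_⟩
  -- part 2
  have hc2 : (0:ℝ) < (2 * α) ^ ((1:ℝ)/(N:ℝ)) := rpow_pos_of_pos h2α _
  have hd : HasDerivAt (fun t : ℝ => g t ^ (2 * α) / (2 * α) ^ ((1:ℝ)/(N:ℝ)))
      (u' s / (2 * α) ^ ((1:ℝ)/(N:ℝ))) s := (hu s).div_const _
  rw [hd.deriv]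
  have hsplit : (2 * α) ^ (((N:ℝ) - 1)/(N:ℝ)) * (2 * α) ^ ((1:ℝ)/(N:ℝ)) = 2 * α := by
    rw [← Real.rpow_add h2α]
    rw [show ((N:ℝ) - 1)/(N:ℝ) + 1/(N:ℝ) = 1 by field_simp; ring]
    exact Real.rpow_one _
  set K : ℝ := (2 * α) ^ (((N:ℝ) - 1)/(N:ℝ)) * g s ^ (2 * α - 1) with hKdef
  have hKpos : 0 < K := by
    rw [hKdef]; positivity
  have h4 : 1 - ε ≤ deriv g s * K := (div_le_iff₀ hKpos).mp hpart1
  have h5 : u' s / (2 * α) ^ ((1:ℝ)/(N:ℝ)) = deriv g s * K := by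
    rw [hu'def, hKdef, div_eq_iff hc2.ne']
    simp only
    linear_combination (-(deriv g s * g s ^ (2 * α - 1))) * hsplit
  rw [h5]
  exact h4
end

section
/- For every ε ∈ (0, 2(1 − (B/(1+B))^{1/N})] and every real s ≥ s_{ε/2}, one has g(s)^{2α} / (2α)^{1/N} ≥ (1 − ε/2)·(s − s_{ε/2}). -/
/-!
Put `P = 2α`, `h = g ^ P` and `u = P^{N-1} g^{N(P-1)}`. Where `g ≥ 0` the equation for `g'` gives
`h' = P^{1/N} (u/(1+u))^{1/N}`, which increases with `g`; hence `h` is convex on `[0, ∞)` with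
`h 0 = 0`, so `h t ≥ t h(1)` for `t ≥ 1`. Since `u = P^{N-1} h^{N(P-1)/P}`, this gives
`u(t) ≥ B t^{N(P-1)/P}`, which is at least `p/(1-p)`, `p = (1-ε/2)^N`, exactly when `t ≥ s_{ε/2}`.
There `u/(1+u) ≥ p`, i.e. `h' ≥ (1-ε/2) P^{1/N}`, and integrating `h'` from `s_{ε/2}` to `s` gives
the estimate. The bound on `ε` says `B ≤ p/(1-p)`, i.e. `s_{ε/2} ≥ 1`.
-/

open Real Set

lemma ConvexOn.mul_le_of_one_le {f : ℝ → ℝ} (hf : ConvexOn ℝ (Ici 0) f) (hf0 : f 0 ≤ 0)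
    {t : ℝ} (ht : 1 ≤ t) : t * f 1 ≤ f t := by
  have hsec := hf.secant_mono (mem_Ici.2 le_rfl) (mem_Ici.2 zero_le_one)
    (mem_Ici.2 (zero_le_one.trans ht)) one_ne_zero (by positivity) ht
  rw [sub_zero, sub_zero, div_one, le_div_iff₀ (by positivity)] at hsec
  nlinarith

lemma monotoneOn_div_one_add : MonotoneOn (fun a : ℝ => a / (1 + a)) (Ici 0) := by
  intro a ha b hb hab
  simp only [mem_Ici] at ha hb
  rw [div_le_div_iff₀ (by positivity) (by positivity)]
  nlinarith

lemma le_div_one_add_of_div_one_sub_le {p a : ℝ} (hp : p < 1) (h : p / (1 - p) ≤ a) :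
    p ≤ a / (1 + a) := by
  have h1p : 0 < 1 - p := by linarith
  rw [div_le_iff₀ h1p] at h
  rw [le_div_iff₀ (by nlinarith)]
  nlinarith

lemma le_div_one_sub_of_div_one_add_le {p a : ℝ} (hp : p < 1) (ha : 0 ≤ a) (h : a / (1 + a) ≤ p) :
    a ≤ p / (1 - p) := by
  rw [div_le_iff₀ (by linarith)] at h
  rw [le_div_iff₀ (by linarith)]
  linarith

lemma le_div_one_sub_rpow {N : ℕ} (hN : N ≠ 0) {B δ : ℝ} (hB : 0 ≤ B) (hδ0 : 0 < δ)
    (hδ : δ ≤ 1 - (B / (1 + B)) ^ (1 / (N : ℝ))) :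
    B ≤ (1 - δ) ^ (N : ℝ) / (1 - (1 - δ) ^ (N : ℝ)) := by
  have hN' : (0 : ℝ) < N := by positivity
  have hroot : (B / (1 + B)) ^ (N : ℝ)⁻¹ ≤ 1 - δ := by rw [← one_div]; linarith
  have h1δ : 0 ≤ 1 - δ := (rpow_nonneg (by positivity) _).trans hroot
  exact le_div_one_sub_of_div_one_add_le (rpow_lt_one h1δ (by linarith) hN') hB
    ((rpow_inv_le_iff_of_pos (by positivity) h1δ hN').1 hroot)

lemma le_rpow_mul_of_div_rpow_inv_le {C B q t : ℝ} (hC : 0 ≤ C) (hB : 0 < B) (hq : 0 < q)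
    (ht : (C / B) ^ q⁻¹ ≤ t) : C ≤ t ^ q * B := by
  have ht0 : 0 ≤ t := (rpow_nonneg (by positivity) _).trans ht
  rwa [← div_le_iff₀ hB, ← rpow_inv_le_iff_of_pos (by positivity) ht0 hq]

section Weight

variable (N : ℕ) (P : ℝ)

noncomputable def weight (x : ℝ) : ℝ := P ^ ((N : ℝ) - 1) * x ^ ((N : ℝ) * (P - 1))

noncomputable def powDeriv (x : ℝ) : ℝ :=
  P ^ (1 / (N : ℝ)) * (weight N P x / (1 + weight N P x)) ^ (1 / (N : ℝ))

variable {N P}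

lemma weight_nonneg (hP : 0 ≤ P) {x : ℝ} (hx : 0 ≤ x) : 0 ≤ weight N P x := by
  unfold weight; positivity

lemma weight_monotoneOn (hP : 1 ≤ P) : MonotoneOn (weight N P) (Ici 0) := by
  intro x hx y _ hxy
  exact mul_le_mul_of_nonneg_left (rpow_le_rpow hx hxy (by have := sub_nonneg.2 hP; positivity))
    (by positivity)

lemma weight_eq_rpow_rpow (hP : 0 < P) {x : ℝ} (hx : 0 ≤ x) :
    weight N P x = P ^ ((N : ℝ) - 1) * (x ^ P) ^ ((N : ℝ) * (P - 1) / P) := by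
  rw [weight, ← rpow_mul hx, mul_div_cancel₀ _ hP.ne']

lemma powDeriv_monotoneOn (hP : 1 ≤ P) : MonotoneOn (powDeriv N P) (Ici 0) := by
  intro x hx y hy hxy
  have hw : ∀ z ∈ Ici (0 : ℝ), weight N P z ∈ Ici 0 := fun z hz => weight_nonneg (by linarith) hz
  have hq := monotoneOn_div_one_add (hw x hx) (hw y hy) (weight_monotoneOn hP hx hy hxy)
  have hq0 : 0 ≤ weight N P x / (1 + weight N P x) :=
    div_nonneg (hw x hx) (by linarith [(hw x hx).out])
  exact mul_le_mul_of_nonneg_left (rpow_le_rpow hq0 hq (by positivity)) (by positivity)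

lemma mul_rpow_sub_one_mul_eq_powDeriv (hN : N ≠ 0) (hP : 0 < P) {x : ℝ} (hx : 0 ≤ x) :
    P * x ^ (P - 1) * (1 + weight N P x) ^ (-(1 / (N : ℝ))) = powDeriv N P x := by
  have hN' : (N : ℝ) ≠ 0 := Nat.cast_ne_zero.2 hN
  have hw := weight_nonneg hP.le hx (N := N)
  have hroot : weight N P x ^ (1 / (N : ℝ)) = P ^ (((N : ℝ) - 1) / N) * x ^ (P - 1) := by
    rw [weight, mul_rpow (by positivity) (by positivity), ← rpow_mul hP.le, ← rpow_mul hx]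
    congr 2 <;> field_simp
  have hP1 : P ^ (1 / (N : ℝ)) * P ^ (((N : ℝ) - 1) / N) = P := by
    rw [← rpow_add hP, ← add_div, add_sub_cancel, div_self hN', rpow_one]
  rw [powDeriv, div_rpow hw (by positivity), hroot, rpow_neg (by positivity)]
  linear_combination -(x ^ (P - 1) * ((1 + weight N P x) ^ (1 / (N : ℝ)))⁻¹) * hP1

lemma le_powDeriv (hN : N ≠ 0) (hP : 0 ≤ P) {δ x : ℝ} (hδ0 : 0 < δ) (hδ1 : δ ≤ 1)
    (hx : (1 - δ) ^ (N : ℝ) / (1 - (1 - δ) ^ (N : ℝ)) ≤ weight N P x) :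
    (1 - δ) * P ^ (1 / (N : ℝ)) ≤ powDeriv N P x := by
  have hN' : (0 : ℝ) < N := by positivity
  have hp1 : (1 - δ) ^ (N : ℝ) < 1 := rpow_lt_one (by linarith) (by linarith) hN'
  have hroot : ((1 - δ) ^ (N : ℝ)) ^ (1 / (N : ℝ)) = 1 - δ := by
    rw [← rpow_mul (by linarith), mul_one_div_cancel hN'.ne', rpow_one]
  rw [powDeriv, mul_comm]
  gcongr
  calc 1 - δ = ((1 - δ) ^ (N : ℝ)) ^ (1 / (N : ℝ)) := hroot.symm
    _ ≤ _ := by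
      gcongr
      exact le_div_one_add_of_div_one_sub_le hp1 hx

end Weight

section Profile

variable {N : ℕ} {P : ℝ} {g : ℝ → ℝ}

lemma strictMono_of_deriv_eq_one_add_weight (hP : 0 ≤ P)
    (hg' : ∀ t, deriv g t = (1 + weight N P |g t|) ^ (-(1 / (N : ℝ)))) : StrictMono g :=
  strictMono_of_deriv_pos fun t => by
    have := weight_nonneg hP (abs_nonneg (g t)) (N := N)
    rw [hg']
    positivity

lemma hasDerivAt_rpow_of_deriv_eq (hN : N ≠ 0) (hP : 1 < P) (hg : Differentiable ℝ g)
    (hg' : ∀ t, deriv g t = (1 + weight N P |g t|) ^ (-(1 / (N : ℝ)))) {t : ℝ} (ht : 0 ≤ g t) :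
    HasDerivAt (fun t => g t ^ P) (powDeriv N P (g t)) t := by
  have h := (hasDerivAt_rpow_const (Or.inr hP.le)).comp t (hg t).hasDerivAt
  rwa [hg', abs_of_nonneg ht, mul_rpow_sub_one_mul_eq_powDeriv hN (by linarith) ht] at h

lemma convexOn_rpow_of_deriv_eq (hN : N ≠ 0) (hP : 1 < P) (hg : Differentiable ℝ g)
    (hg' : ∀ t, deriv g t = (1 + weight N P |g t|) ^ (-(1 / (N : ℝ)))) (hg0 : g 0 = 0) :
    ConvexOn ℝ (Ici 0) (fun t => g t ^ P) := by
  have hmono := strictMono_of_deriv_eq_one_add_weight (by linarith) hg'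
  have hpos : ∀ t ∈ Ici (0 : ℝ), g t ∈ Ici 0 := fun t ht => hg0 ▸ hmono.monotone ht
  have hderiv : ∀ t ∈ Ici (0 : ℝ), HasDerivAt (fun t => g t ^ P) (powDeriv N P (g t)) t :=
    fun t ht => hasDerivAt_rpow_of_deriv_eq hN hP hg hg' (hpos t ht)
  refine MonotoneOn.convexOn_of_deriv (convex_Ici 0)
    (fun t ht => (hderiv t ht).continuousAt.continuousWithinAt) ?_ ?_ <;> rw [interior_Ici]
  · exact fun t ht => (hderiv t (Ioi_subset_Ici_self ht)).differentiableAt.differentiableWithinAt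
  · intro a ha b hb hab
    rw [(hderiv a (Ioi_subset_Ici_self ha)).deriv, (hderiv b (Ioi_subset_Ici_self hb)).deriv]
    exact powDeriv_monotoneOn hP.le (hpos a (Ioi_subset_Ici_self ha))
      (hpos b (Ioi_subset_Ici_self hb)) (hmono.monotone hab)

lemma rpow_mul_weight_le_weight (hN : N ≠ 0) (hP : 1 < P) (hg : Differentiable ℝ g)
    (hg' : ∀ t, deriv g t = (1 + weight N P |g t|) ^ (-(1 / (N : ℝ)))) (hg0 : g 0 = 0)
    {t : ℝ} (ht : 1 ≤ t) :
    t ^ ((N : ℝ) * (P - 1) / P) * weight N P (g 1) ≤ weight N P (g t) := by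
  have hmono := strictMono_of_deriv_eq_one_add_weight (by linarith) hg'
  have hg1 : 0 ≤ g 1 := hg0 ▸ hmono.monotone zero_le_one
  have hgt : 0 ≤ g t := hg1.trans (hmono.monotone ht)
  have hlin : t * g 1 ^ P ≤ g t ^ P :=
    (convexOn_rpow_of_deriv_eq hN hP hg hg' hg0).mul_le_of_one_le
      (by simp [hg0, zero_rpow (by linarith : P ≠ 0)]) ht
  have hq : 0 ≤ (N : ℝ) * (P - 1) / P := div_nonneg (by nlinarith) (by linarith)
  rw [weight_eq_rpow_rpow (by linarith) hg1, weight_eq_rpow_rpow (by linarith) hgt,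
    mul_left_comm, ← mul_rpow (by linarith) (by positivity)]
  gcongr

lemma mul_sub_le_rpow_sub_rpow (hN : N ≠ 0) (hP : 1 < P) (hg : Differentiable ℝ g)
    (hg' : ∀ t, deriv g t = (1 + weight N P |g t|) ^ (-(1 / (N : ℝ)))) (hg0 : g 0 = 0)
    {a b c : ℝ} (ha : 0 ≤ a) (hab : a ≤ b) (hc : ∀ t ∈ Ioo a b, c ≤ powDeriv N P (g t)) :
    c * (b - a) ≤ g b ^ P - g a ^ P := by
  have hmono := strictMono_of_deriv_eq_one_add_weight (by linarith) hg'
  have hderiv : ∀ t ∈ Icc a b, HasDerivAt (fun t => g t ^ P) (powDeriv N P (g t)) t :=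
    fun t ht => hasDerivAt_rpow_of_deriv_eq hN hP hg hg' (hg0 ▸ hmono.monotone (ha.trans ht.1))
  refine (convex_Icc a b).mul_sub_le_image_sub_of_le_deriv
    (fun t ht => (hderiv t ht).continuousAt.continuousWithinAt) ?_ ?_ a (left_mem_Icc.2 hab) b
    (right_mem_Icc.2 hab) hab <;> rw [interior_Icc]
  · exact fun t ht => (hderiv t (Ioo_subset_Icc_self ht)).differentiableAt.differentiableWithinAt
  · intro t ht
    rw [(hderiv t (Ioo_subset_Icc_self ht)).deriv]
    exact hc t ht

end Profile

theorem g_integrated_estimate_general (N : ℕ) (hN : 2 ≤ N) (α : ℝ) (hα : 1 / 2 < α)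
    (g : ℝ → ℝ) (hg_diff : Differentiable ℝ g) (hg_zero : g 0 = 0)
    (hg_deriv : ∀ t : ℝ, deriv g t =
      (1 + (2 * α) ^ ((N : ℝ) - 1) * |g t| ^ ((N : ℝ) * (2 * α - 1))) ^ (-(1 / (N : ℝ))))
    (B : ℝ) (hB : B = (2 * α) ^ ((N : ℝ) - 1) * (g 1) ^ ((2 * α - 1) * (N : ℝ)))
    (s_ : ℝ → ℝ) (hs_ : ∀ δ : ℝ, s_ δ =
      ((1 - δ) ^ (N : ℝ) / ((1 - (1 - δ) ^ (N : ℝ)) * B)) ^ (2 * α / ((2 * α - 1) * (N : ℝ))))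
    : ∀ ε : ℝ, 0 < ε → ε ≤ 2 * (1 - (B / (1 + B)) ^ ((1 : ℝ) / (N : ℝ))) →
      ∀ s : ℝ, s_ (ε / 2) ≤ s →
        (1 - ε / 2) * (s - s_ (ε / 2)) ≤ (g s) ^ (2 * α) / (2 * α) ^ ((1 : ℝ) / (N : ℝ)) := by
  intro ε hε hεB s hs
  set P := 2 * α
  set δ := ε / 2 with hδ
  set p := (1 - δ) ^ (N : ℝ)
  have hP : 1 < P := by linarith
  have hN0 : N ≠ 0 := by omega
  have hmono := strictMono_of_deriv_eq_one_add_weight (N := N) (by linarith) hg_deriv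
  have hB_weight : B = weight N P (g 1) := by rw [hB, weight, mul_comm (2 * α - 1)]
  have hB0 : 0 < B := by rw [hB]; have := hg_zero ▸ hmono one_pos; positivity
  have hδB : δ ≤ 1 - (B / (1 + B)) ^ (1 / (N : ℝ)) := by linarith
  have hδ1 : δ ≤ 1 := hδB.trans (sub_le_self _ (by positivity))
  have hBp : B ≤ p / (1 - p) := le_div_one_sub_rpow hN0 hB0.le (by positivity) hδB
  have hs_eq : s_ δ = (p / (1 - p) / B) ^ ((N : ℝ) * (P - 1) / P)⁻¹ := by
    rw [hs_, div_div, inv_div, mul_comm (P - 1)]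
  have hs1 : 1 ≤ s_ δ := hs_eq ▸ one_le_rpow ((one_le_div hB0).2 hBp) (by positivity)
  have hderiv_ge : ∀ t ∈ Ioo (s_ δ) s, (1 - δ) * P ^ (1 / (N : ℝ)) ≤ powDeriv N P (g t) := by
    intro t ht
    refine le_powDeriv hN0 (by linarith) (by positivity) hδ1 ?_
    calc p / (1 - p)
        ≤ t ^ ((N : ℝ) * (P - 1) / P) * B :=
          le_rpow_mul_of_div_rpow_inv_le (hB0.le.trans hBp) hB0 (by positivity) (hs_eq ▸ ht.1.le)
      _ ≤ weight N P (g t) :=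
          hB_weight ▸ rpow_mul_weight_le_weight hN0 hP hg_diff hg_deriv hg_zero (by linarith [ht.1])
  have hgrowth :=
    mul_sub_le_rpow_sub_rpow hN0 hP hg_diff hg_deriv hg_zero (by linarith) hs hderiv_ge
  have hgs : 0 ≤ g (s_ δ) ^ P := rpow_nonneg (hg_zero ▸ hmono.monotone (by linarith)) P
  rw [le_div_iff₀ (by positivity)]
  linarith

theorem g_integrated_estimate (N : ℕ) (hN : 2 ≤ N) (α : ℝ) (hα : 1 / 2 < α)
    (g : ℝ → ℝ) (hg_diff : Differentiable ℝ g) (hg_zero : g 0 = 0)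
    (hg_odd : ∀ t : ℝ, g (-t) = -g t)
    (hg_deriv : ∀ t : ℝ, deriv g t =
      (1 + (2 * α) ^ ((N : ℝ) - 1) * |g t| ^ ((N : ℝ) * (2 * α - 1))) ^ (-(1 / (N : ℝ))))
    (B : ℝ) (hB : B = (2 * α) ^ ((N : ℝ) - 1) * (g 1) ^ ((2 * α - 1) * (N : ℝ)))
    (s_ : ℝ → ℝ) (hs_ : ∀ δ : ℝ, s_ δ =
      ((1 - δ) ^ (N : ℝ) / ((1 - (1 - δ) ^ (N : ℝ)) * B)) ^ (2 * α / ((2 * α - 1) * (N : ℝ))))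
    : ∀ ε : ℝ, 0 < ε → ε ≤ 2 * (1 - (B / (1 + B)) ^ ((1 : ℝ) / (N : ℝ))) →
      ∀ s : ℝ, s_ (ε / 2) ≤ s →
        (1 - ε / 2) * (s - s_ (ε / 2)) ≤ (g s) ^ (2 * α) / (2 * α) ^ ((1 : ℝ) / (N : ℝ)) :=
  g_integrated_estimate_general N hN α hα g hg_diff hg_zero hg_deriv B hB s_ hs_
end

section
/- Let k be a natural number and let C > 0, M₀ > 0 and s₀ ≥ max{1, g(1)} be real numbers. Suppose H : ℝ → ℝ satisfies H(s) ≥ 0 for all s ≥ 0 and H(s) ≥ C·exp(s/M₀) for all s ≥ s₀. Then there exist constants C₁ > 0 and C₂ > 0 such that H(g(u)) ≥ C₁·u^{k/(2α)} − C₂ for all u ≥ 0. -/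
/-!
Since `g' = (1 + A |g|^β)^(-1/N)` with `A = (2α)^(N-1)`, `β = N(2α-1)`, and `g` is increasing, the
mean value theorem on `[0, u]` gives `u ≤ g u (1 + A (g u)^β)^(1/N) ≲ max(1, g u)^(2α)`, because
`1 + β/N = 2α`. Hence `u^(k/(2α)) ≲ max(1, g u)^k`, and `exp(s/M₀) ≥ s^k/(M₀^k k!)` turns the
exponential growth of `H` into `H s ≳ max(1, s)^k - s₀^k` for all `s ≥ 0`.
-/

open Real Set

section RpowODE

variable {g : ℝ → ℝ} {A β p : ℝ}

lemma deriv_pos_of_deriv_eq_rpow (hA : 0 ≤ A)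
    (hg : ∀ t, deriv g t = (1 + A * |g t| ^ β) ^ (-p)) (t : ℝ) : 0 < deriv g t := by
  rw [hg t]
  positivity

lemma strictMono_of_deriv_eq_rpow (hA : 0 ≤ A)
    (hg : ∀ t, deriv g t = (1 + A * |g t| ^ β) ^ (-p)) : StrictMono g :=
  strictMono_of_deriv_pos (deriv_pos_of_deriv_eq_rpow hA hg)

lemma le_mul_rpow_of_deriv_eq_rpow (hA : 0 ≤ A) (hβ : 0 ≤ β) (hp : 0 ≤ p) (hg0 : g 0 = 0)
    (hg : ∀ t, deriv g t = (1 + A * |g t| ^ β) ^ (-p)) {u : ℝ} (hu : 0 ≤ u) :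
    u ≤ g u * (1 + A * g u ^ β) ^ p := by
  have hmono := (strictMono_of_deriv_eq_rpow hA hg).monotone
  have hdiff : Differentiable ℝ g := fun t =>
    differentiableAt_of_deriv_ne_zero (deriv_pos_of_deriv_eq_rpow hA hg t).ne'
  have hbase : 0 < 1 + A * g u ^ β := by
    have := hg0 ▸ hmono hu
    positivity
  -- on `[0, u]` we have `0 ≤ g t ≤ g u`, and `g'` decreases in `|g|`
  have hderiv : ∀ t ∈ interior (Icc 0 u), (1 + A * g u ^ β) ^ (-p) ≤ deriv g t := by
    rw [interior_Icc]
    rintro t ⟨ht0, htu⟩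
    have hgt : 0 ≤ g t := hg0 ▸ hmono ht0.le
    rw [hg t, abs_of_nonneg hgt]
    refine rpow_le_rpow_of_nonpos (by positivity) ?_ (neg_nonpos.mpr hp)
    gcongr
    exact hmono htu.le
  have hmvt := (convex_Icc 0 u).mul_sub_le_image_sub_of_le_deriv hdiff.continuous.continuousOn
    hdiff.differentiableOn hderiv 0 (left_mem_Icc.mpr hu) u (right_mem_Icc.mpr hu) hu
  rw [hg0, sub_zero, sub_zero, rpow_neg hbase.le, inv_mul_eq_div,
    div_le_iff₀ (rpow_pos_of_pos hbase p)] at hmvt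
  exact hmvt

end RpowODE

lemma mul_one_add_mul_rpow_le {A β p y : ℝ} (hA : 0 ≤ A) (hβ : 0 ≤ β) (hp : 0 ≤ p)
    (hy : 0 ≤ y) : y * (1 + A * y ^ β) ^ p ≤ (1 + A) ^ p * max 1 y ^ (1 + β * p) := by
  set Y := max 1 y
  have hY1 : 1 ≤ Y := le_max_left 1 y
  have hY0 : 0 < Y := one_pos.trans_le hY1
  have hbase : 1 + A * y ^ β ≤ (1 + A) * Y ^ β := by
    have h1 : 1 ≤ Y ^ β := one_le_rpow hY1 hβ
    have h2 : y ^ β ≤ Y ^ β := rpow_le_rpow hy (le_max_right 1 y) hβ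
    nlinarith
  calc y * (1 + A * y ^ β) ^ p ≤ Y * ((1 + A) * Y ^ β) ^ p := by
        gcongr
        exact le_max_right 1 y
    _ = (1 + A) ^ p * Y ^ (1 + β * p) := by
        rw [mul_rpow (by positivity) (by positivity), ← rpow_mul hY0.le, rpow_add hY0, rpow_one]
        ring

lemma mul_max_pow_sub_le_of_exp_le {H : ℝ → ℝ} {C M₀ s₀ : ℝ} (k : ℕ) (hC : 0 ≤ C) (hM₀ : 0 ≤ M₀)
    (hs₀ : 1 ≤ s₀) (hH_nonneg : ∀ s, 0 ≤ s → 0 ≤ H s)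
    (hH_exp : ∀ s, s₀ ≤ s → C * exp (s / M₀) ≤ H s) {y : ℝ} (hy : 0 ≤ y) :
    C / (M₀ ^ k * k.factorial) * (max 1 y ^ k - s₀ ^ k) ≤ H y := by
  have hc : 0 ≤ C / (M₀ ^ k * k.factorial) := by positivity
  rcases le_or_gt s₀ y with hsy | hys
  · have hy1 : max 1 y = y := max_eq_right (hs₀.trans hsy)
    calc C / (M₀ ^ k * k.factorial) * (max 1 y ^ k - s₀ ^ k)
        ≤ C / (M₀ ^ k * k.factorial) * y ^ k := by
          rw [hy1]
          exact mul_le_mul_of_nonneg_left (sub_le_self _ (by positivity)) hc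
      _ = C * ((y / M₀) ^ k / k.factorial) := by rw [div_pow]; ring
      _ ≤ C * exp (y / M₀) := by
          gcongr
          exact pow_div_factorial_le_exp _ (by positivity) k
      _ ≤ H y := hH_exp y hsy
  · have hmax : max 1 y ^ k ≤ s₀ ^ k :=
      pow_le_pow_left₀ (zero_le_one.trans (le_max_left 1 y)) (max_le hs₀ hys.le) k
    exact (mul_nonpos_of_nonneg_of_nonpos hc (sub_nonpos.mpr hmax)).trans (hH_nonneg y hy)

theorem H_lower_bound_polynomial_general (N : ℕ) (hN : 2 ≤ N) (α : ℝ) (hα : 1 / 2 < α)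
    (g : ℝ → ℝ) (hg_zero : g 0 = 0)
    (hg_deriv : ∀ t : ℝ, deriv g t =
      (1 + (2 * α) ^ ((N : ℝ) - 1) * |g t| ^ ((N : ℝ) * (2 * α - 1))) ^ (-(1 / (N : ℝ))))
    (k : ℕ) (C M₀ s₀ : ℝ) (hC : 0 < C) (hM₀ : 0 < M₀) (hs₀ : max 1 (g 1) ≤ s₀)
    (H : ℝ → ℝ) (hH_nonneg : ∀ s : ℝ, 0 ≤ s → 0 ≤ H s)
    (hH_exp : ∀ s : ℝ, s₀ ≤ s → C * Real.exp (s / M₀) ≤ H s)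
    : ∃ C₁ > (0 : ℝ), ∃ C₂ > (0 : ℝ), ∀ u : ℝ, 0 ≤ u →
        C₁ * u ^ ((k : ℝ) / (2 * α)) - C₂ ≤ H (g u) := by
  set A := (2 * α) ^ ((N : ℝ) - 1)
  set β := (N : ℝ) * (2 * α - 1)
  set B := (1 + A) ^ (1 / (N : ℝ))
  set q := (k : ℝ) / (2 * α)
  set c := C / (M₀ ^ k * k.factorial)
  have hN0 : (N : ℝ) ≠ 0 := Nat.cast_ne_zero.mpr (by omega)
  have hA : 0 ≤ A := by positivity
  have hβ : 0 ≤ β := mul_nonneg (Nat.cast_nonneg N) (by linarith)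
  have hs₀1 : 1 ≤ s₀ := (le_max_left 1 (g 1)).trans hs₀
  have hexp : 1 + β * (1 / (N : ℝ)) = 2 * α := by field_simp; ring
  have hg_nonneg : ∀ u, 0 ≤ u → 0 ≤ g u := fun u hu =>
    hg_zero ▸ (strictMono_of_deriv_eq_rpow hA hg_deriv).monotone hu
  have hgrowth : ∀ u, 0 ≤ u → u ^ q ≤ B ^ q * max 1 (g u) ^ k := fun u hu => by
    have hle := (le_mul_rpow_of_deriv_eq_rpow hA hβ (by positivity) hg_zero hg_deriv hu).trans
      (mul_one_add_mul_rpow_le hA hβ (by positivity) (hg_nonneg u hu))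
    rw [hexp] at hle
    calc u ^ q ≤ (B * max 1 (g u) ^ (2 * α)) ^ q := by gcongr
      _ = B ^ q * max 1 (g u) ^ k := by
        rw [mul_rpow (by positivity) (by positivity),
          ← rpow_mul (zero_le_one.trans (le_max_left 1 (g u))), mul_div_cancel₀ _ (by linarith),
          rpow_natCast]
  refine ⟨c / B ^ q, by positivity, c * s₀ ^ k, by positivity, fun u hu => ?_⟩
  have hB : 0 < B ^ q := by positivity
  calc c / B ^ q * u ^ q - c * s₀ ^ k
      ≤ c / B ^ q * (B ^ q * max 1 (g u) ^ k) - c * s₀ ^ k := by gcongr; exact hgrowth u hu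
    _ = c * (max 1 (g u) ^ k - s₀ ^ k) := by field_simp
    _ ≤ H (g u) := mul_max_pow_sub_le_of_exp_le k hC.le hM₀.le hs₀1 hH_nonneg hH_exp (hg_nonneg u hu)

theorem H_lower_bound_polynomial (N : ℕ) (hN : 2 ≤ N) (α : ℝ) (hα : 1 / 2 < α)
    (g : ℝ → ℝ) (hg_diff : Differentiable ℝ g) (hg_zero : g 0 = 0)
    (hg_odd : ∀ t : ℝ, g (-t) = -g t)
    (hg_deriv : ∀ t : ℝ, deriv g t =
      (1 + (2 * α) ^ ((N : ℝ) - 1) * |g t| ^ ((N : ℝ) * (2 * α - 1))) ^ (-(1 / (N : ℝ))))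
    (k : ℕ) (C M₀ s₀ : ℝ) (hC : 0 < C) (hM₀ : 0 < M₀) (hs₀ : max 1 (g 1) ≤ s₀)
    (H : ℝ → ℝ) (hH_nonneg : ∀ s : ℝ, 0 ≤ s → 0 ≤ H s)
    (hH_exp : ∀ s : ℝ, s₀ ≤ s → C * Real.exp (s / M₀) ≤ H s)
    : ∃ C₁ > (0 : ℝ), ∃ C₂ > (0 : ℝ), ∀ u : ℝ, 0 ≤ u →
        C₁ * u ^ ((k : ℝ) / (2 * α)) - C₂ ≤ H (g u) :=
  H_lower_bound_polynomial_general N hN α hα g hg_zero hg_deriv k C M₀ s₀ hC hM₀ hs₀ H hH_nonneg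
    hH_exp
end
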